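/- arXiv:1403.2270 — 2 statements merged into one kernel-verified Lean document; each statement's English description precedes it below -/
import Mathlib

section
/- Let P(z) = a_n ∏_{ν=1}^{n} (z − z_ν) be a complex polynomial of degree n ≥ 1 whose zeros satisfy |z_ν| ≥ k_ν ≥ 1 for 1 ≤ ν ≤ n, and let Q(z) = z^n · conj(P(1/conj(z))). Set t₀ = 1 + n / (∑_{ν=1}^{n} 1/(k_ν − 1)) if k_ν > 1 for all ν, and t₀ = 1 if k_ν = 1 for some ν. Then for every z with |z| = 1, |Q′(z)| ≥ t₀ |P′(z)|. -/
/-!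
On `|w| = 1` one has `|Q'(w)| = |n P(w) - w P'(w)|`, since `X Q' = reflect n (conj (n P - X P'))`.
Away from the zeros, `w P'(w) = P(w) ∑ u_ν` with `u_ν = w / (w - z_ν)`, and `|z_ν| ≥ k_ν` says
`k_ν |u_ν| ≤ |u_ν - 1|`: each `u_ν` lies in the Apollonius disk with diameter
`[-1/(k_ν - 1), 1/(k_ν + 1)]` (in the half-plane `Re u ≤ 1/2` when `k_ν = 1`). So `S = ∑ u_ν` lies
in the disk with diameter `[-T, D]`, `T = ∑ 1/(k_ν - 1)`, `D = ∑ 1/(k_ν + 1)`, and Chebyshev's sum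
inequality `T D ≤ n (T - D) / 2` is what makes `|S - n| / |S|` minimal on that disk at `S = -T`,
where it equals `1 + n / T`.
-/

open Polynomial Finset

theorem coeff_X_mul_derivative {R : Type*} [CommSemiring R] (f : R[X]) (i : ℕ) :
    (X * derivative f).coeff i = i * f.coeff i := by
  cases i with
  | zero => simp
  | succ i => rw [coeff_X_mul, coeff_derivative, mul_comm, Nat.cast_succ]

theorem natDegree_X_mul_derivative_le {R : Type*} [CommSemiring R] (f : R[X]) :
    (X * derivative f).natDegree ≤ f.natDegree :=
  natDegree_le_iff_coeff_eq_zero.mpr fun i hi => by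
    rw [coeff_X_mul_derivative, coeff_eq_zero_of_natDegree_lt hi, mul_zero]

theorem X_mul_derivative_reflect {R : Type*} [CommRing R] {f : R[X]} {N : ℕ}
    (hf : f.natDegree ≤ N) :
    X * derivative (reflect N f) = reflect N (C (N : R) * f - X * derivative f) := by
  ext i
  rw [coeff_X_mul_derivative, coeff_reflect, coeff_reflect, coeff_sub, coeff_C_mul,
    coeff_X_mul_derivative, ← sub_mul]
  by_cases hi : i ≤ N
  · rw [revAt_le hi, Nat.cast_sub hi, sub_sub_cancel]
  · rw [← revAtFun_eq, revAtFun, if_neg hi, coeff_eq_zero_of_natDegree_lt (by omega), mul_zero,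
      mul_zero]

theorem eval_reflect {K : Type*} [Field K] {f : K[X]} {N : ℕ} (hf : f.natDegree ≤ N) {x : K}
    (hx : x ≠ 0) : (reflect N f).eval x = x ^ N * f.eval x⁻¹ := by
  let := invertibleOfNonzero (inv_ne_zero hx)
  have h := eval₂_reflect_mul_pow (RingHom.id K) x⁻¹ N f hf
  rw [invOf_eq_inv, inv_inv] at h
  rw [eval, eval, ← h, inv_pow, mul_left_comm, mul_inv_cancel₀ (pow_ne_zero N hx), mul_one]

theorem norm_eval_derivative_reflect_map_conj {P : ℂ[X]} {n : ℕ} (hP : P.natDegree ≤ n)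
    {w : ℂ} (hw : ‖w‖ = 1) :
    ‖(reflect n (P.map (starRingEnd ℂ))).derivative.eval w‖
      = ‖n * P.eval w - w * P.derivative.eval w‖ := by
  have hw0 : w ≠ 0 := norm_ne_zero_iff.mp (hw.trans_ne one_ne_zero)
  set R := C (n : ℂ) * P - X * derivative P
  have hR : R.natDegree ≤ n := max_self n ▸
    natDegree_sub_le_of_le ((natDegree_C_mul_le _ _).trans hP)
      ((natDegree_X_mul_derivative_le P).trans hP)
  have hmap : C (n : ℂ) * P.map (starRingEnd ℂ) - X * derivative (P.map (starRingEnd ℂ))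
      = R.map (starRingEnd ℂ) := by
    simp [R, Polynomial.map_sub, derivative_map]
  calc ‖(reflect n (P.map (starRingEnd ℂ))).derivative.eval w‖
      = ‖(X * (reflect n (P.map (starRingEnd ℂ))).derivative).eval w‖ := by
        rw [eval_mul, eval_X, norm_mul, hw, one_mul]
    _ = ‖(R.map (starRingEnd ℂ)).eval (starRingEnd ℂ w)‖ := by
        rw [X_mul_derivative_reflect ((natDegree_map_le).trans hP), hmap,
          eval_reflect ((natDegree_map_le).trans hR) hw0, norm_mul, norm_pow, hw, one_pow,
          one_mul, Complex.inv_eq_conj hw]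
    _ = ‖n * P.eval w - w * P.derivative.eval w‖ := by
        rw [eval_map_apply, Complex.norm_conj]
        simp [R]

theorem eval_derivative_prod_X_sub_C {K ι : Type*} [Field K] [Fintype ι] (z : ι → K) {x : K}
    (hx : ∀ i, x ≠ z i) :
    (∏ i, (X - C (z i))).derivative.eval x
      = (∏ i, (X - C (z i))).eval x * ∑ i, 1 / (x - z i) := by
  classical
  rw [derivative_prod_finset, eval_finsetSum, mul_sum]
  refine sum_congr rfl fun i _ => ?_
  rw [derivative_X_sub_C, mul_one, eval_prod, eval_prod, ← mul_prod_erase _ _ (mem_univ i)]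
  simp only [eval_sub, eval_X, eval_C]
  field_simp [sub_ne_zero.mpr (hx i)]

theorem Complex.two_mul_re_le_one_of_norm_le_norm_sub_one {u : ℂ} (h : ‖u‖ ≤ ‖u - 1‖) :
    2 * u.re ≤ 1 := by
  have h2 := pow_le_pow_left₀ (norm_nonneg u) h 2
  simp only [Complex.sq_norm, Complex.normSq_apply, Complex.sub_re, Complex.sub_im,
    Complex.one_re, Complex.one_im] at h2
  nlinarith

theorem Complex.norm_le_norm_sub_ofReal {S : ℂ} {c : ℝ} (hc : 0 ≤ c) (h : 2 * S.re ≤ c) :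
    ‖S‖ ≤ ‖S - c‖ := by
  refine (sq_le_sq₀ (norm_nonneg _) (norm_nonneg _)).mp ?_
  simp only [Complex.sq_norm, Complex.normSq_apply, Complex.sub_re, Complex.sub_im,
    Complex.ofReal_re, Complex.ofReal_im]
  nlinarith

-- The Apollonius disk `k |u| ≤ |u - 1|` has diameter `[-1/(k-1), 1/(k+1)]`.
theorem Complex.norm_add_le_of_mul_norm_le_norm_sub_one {k : ℝ} (hk : 1 < k) {u : ℂ}
    (h : k * ‖u‖ ≤ ‖u - 1‖) :
    ‖u + ((1 / (k - 1) - 1 / (k + 1)) / 2 : ℝ)‖ ≤ (1 / (k - 1) + 1 / (k + 1)) / 2 := by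
  have hk1 : 0 < k - 1 := by linarith
  have hk2 : 0 < k + 1 := by linarith
  refine (sq_le_sq₀ (norm_nonneg _) (by positivity)).mp ?_
  have h2 := pow_le_pow_left₀ (by positivity) h 2
  rw [mul_pow] at h2
  simp only [Complex.sq_norm, Complex.normSq_apply, Complex.sub_re, Complex.sub_im,
    Complex.add_re, Complex.add_im, Complex.ofReal_re, Complex.ofReal_im, Complex.one_re,
    Complex.one_im] at h2 ⊢
  field_simp
  nlinarith

theorem sum_one_div_sub_one_mul_sum_one_div_add_one_le {ι : Type*} [Fintype ι] {k : ι → ℝ}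
    (hk : ∀ i, 1 < k i) :
    (∑ i, 1 / (k i - 1)) * ∑ i, 1 / (k i + 1)
      ≤ Fintype.card ι * ((∑ i, 1 / (k i - 1) - ∑ i, 1 / (k i + 1)) / 2) := by
  have hmono : Monovary (fun i => 1 / (k i - 1)) (fun i => 1 / (k i + 1)) := by
    intro i j hij
    have : k j < k i := by
      by_contra! hle
      exact hij.not_ge (one_div_le_one_div_of_le (by linarith [hk i]) (by linarith))
    exact one_div_le_one_div_of_le (by linarith [hk j]) (by linarith)
  refine hmono.sum_mul_sum_le_card_mul_sum.trans_eq ?_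
  rw [← sum_sub_distrib, sum_div]
  congr 1
  refine sum_congr rfl fun i _ => ?_
  have h1 : k i - 1 ≠ 0 := by linarith [hk i]
  have h2 : k i + 1 ≠ 0 := by linarith [hk i]
  field_simp
  ring

theorem one_add_div_mul_norm_le_norm_sub {S : ℂ} {T D m : ℝ} (hD : 0 ≤ D) (hDT : D ≤ T)
    (hm : 0 ≤ m) (hTD : T * D ≤ m * ((T - D) / 2)) (hS : ‖S + ((T - D) / 2 : ℝ)‖ ≤ (T + D) / 2) :
    (1 + m / T) * ‖S‖ ≤ ‖S - m‖ := by
  rcases (hD.trans hDT).eq_or_lt with rfl | hT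
  · obtain rfl : D = 0 := le_antisymm hDT hD
    have hS0 : S = 0 := by simpa using hS
    simp [hS0]
  have hre : -T ≤ S.re := by
    have := (Complex.abs_re_le_norm _).trans hS
    rw [Complex.add_re, Complex.ofReal_re, abs_le] at this
    linarith
  have hdisk : S.re ^ 2 + S.im ^ 2 ≤ T * D - (T - D) * S.re := by
    have h2 := pow_le_pow_left₀ (norm_nonneg _) hS 2
    simp only [Complex.sq_norm, Complex.normSq_apply, Complex.add_re, Complex.add_im,
      Complex.ofReal_re, Complex.ofReal_im] at h2
    nlinarith
  have hE : 0 ≤ m * (T - D) - 2 * T * D := by linarith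
  rw [← div_self hT.ne', ← add_div, div_mul_eq_mul_div, div_le_iff₀ hT]
  refine (sq_le_sq₀ (by positivity) (by positivity)).mp ?_
  rw [mul_pow, mul_pow, Complex.sq_norm, Complex.sq_norm]
  simp only [Complex.normSq_apply, Complex.sub_re, Complex.sub_im, Complex.ofReal_re,
    Complex.ofReal_im]
  nlinarith [mul_nonneg hE (neg_le_iff_add_nonneg.mp hre),
    mul_nonneg (by positivity : 0 ≤ 2 * T + m) (sub_nonneg.mpr hdisk)]

theorem Complex.mul_norm_div_sub_le_norm_div_sub_sub_one {w z : ℂ} (hw : ‖w‖ = 1) (hwz : w ≠ z)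
    {k : ℝ} (hk : k ≤ ‖z‖) : k * ‖w / (w - z)‖ ≤ ‖w / (w - z) - 1‖ := by
  rw [div_sub_one (sub_ne_zero.mpr hwz), sub_sub_cancel, norm_div, norm_div, hw, mul_one_div]
  gcongr

theorem norm_sum_le_norm_sum_sub_card {ι : Type*} [Fintype ι] {u : ι → ℂ}
    (hu : ∀ i, ‖u i‖ ≤ ‖u i - 1‖) : ‖∑ i, u i‖ ≤ ‖∑ i, u i - Fintype.card ι‖ := by
  have hre : 2 * (∑ i, u i).re ≤ Fintype.card ι := by
    rw [Complex.re_sum, mul_sum, ← nsmul_one, ← card_univ, ← sum_const]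
    exact sum_le_sum fun i _ => Complex.two_mul_re_le_one_of_norm_le_norm_sub_one (hu i)
  exact_mod_cast Complex.norm_le_norm_sub_ofReal (Nat.cast_nonneg _) hre

theorem one_add_card_div_mul_norm_sum_le {ι : Type*} [Fintype ι] {k : ι → ℝ}
    (hk : ∀ i, 1 < k i) {u : ι → ℂ} (hu : ∀ i, k i * ‖u i‖ ≤ ‖u i - 1‖) :
    (1 + Fintype.card ι / ∑ i, 1 / (k i - 1)) * ‖∑ i, u i‖
      ≤ ‖∑ i, u i - Fintype.card ι‖ := by
  have hD : 0 ≤ ∑ i, 1 / (k i + 1) :=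
    sum_nonneg fun i _ => (one_div_pos.mpr (by linarith [hk i])).le
  have hDT : ∑ i, 1 / (k i + 1) ≤ ∑ i, 1 / (k i - 1) :=
    sum_le_sum fun i _ => one_div_le_one_div_of_le (by linarith [hk i]) (by linarith)
  have hS : ‖∑ i, u i + ((∑ i, 1 / (k i - 1) - ∑ i, 1 / (k i + 1)) / 2 : ℝ)‖
      ≤ (∑ i, 1 / (k i - 1) + ∑ i, 1 / (k i + 1)) / 2 := by
    rw [← sum_sub_distrib, ← sum_add_distrib, sum_div, sum_div, Complex.ofReal_sum,
      ← sum_add_distrib]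
    exact (norm_sum_le _ _).trans (sum_le_sum fun i _ =>
      Complex.norm_add_le_of_mul_norm_le_norm_sub_one (hk i) (hu i))
  exact_mod_cast one_add_div_mul_norm_le_norm_sub hD hDT (Nat.cast_nonneg _)
    (sum_one_div_sub_one_mul_sum_one_div_add_one_le hk) hS

theorem mul_norm_sum_le_norm_sum_sub_card {ι : Type*} [Fintype ι] {k : ι → ℝ}
    (hk1 : ∀ i, 1 ≤ k i) {u : ι → ℂ} (hu : ∀ i, k i * ‖u i‖ ≤ ‖u i - 1‖) {t₀ : ℝ}
    (ht₀ : (∀ i, 1 < k i) → t₀ = 1 + Fintype.card ι / ∑ i, 1 / (k i - 1))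
    (ht₀' : (∃ i, k i = 1) → t₀ = 1) :
    t₀ * ‖∑ i, u i‖ ≤ ‖∑ i, u i - Fintype.card ι‖ := by
  by_cases hk : ∃ i, k i = 1
  · rw [ht₀' hk, one_mul]
    exact norm_sum_le_norm_sum_sub_card fun i =>
      (le_mul_of_one_le_left (norm_nonneg _) (hk1 i)).trans (hu i)
  · push Not at hk
    have hk' : ∀ i, 1 < k i := fun i => (hk1 i).lt_of_ne' (hk i)
    rw [ht₀ hk']
    exact one_add_card_div_mul_norm_sum_le hk' hu

theorem stmt_2_general (n : ℕ) (a : ℂ) (z : Fin n → ℂ)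
    (P Q : Polynomial ℂ)
    (hP : P = Polynomial.C a * ∏ ν, (Polynomial.X - Polynomial.C (z ν)))
    (hQ : Q = Polynomial.reflect n (P.map (starRingEnd ℂ)))
    (k : Fin n → ℝ) (hk1 : ∀ ν, 1 ≤ k ν) (hzk : ∀ ν, k ν ≤ ‖z ν‖)
    (t₀ : ℝ)
    (ht₀ : (∀ ν, 1 < k ν) → t₀ = 1 + (n : ℝ) / ∑ ν, 1 / (k ν - 1))
    (ht₀' : (∃ ν, k ν = 1) → t₀ = 1) :
    ∀ w : ℂ, ‖w‖ = 1 →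
      t₀ * ‖P.derivative.eval w‖ ≤ ‖Q.derivative.eval w‖ := by
  intro w hw
  have hdeg : P.natDegree ≤ n := hP ▸ (natDegree_C_mul_le _ _).trans
    ((natDegree_prod_le _ _).trans (by simp))
  rw [hQ, norm_eval_derivative_reflect_map_conj hdeg hw]
  by_cases hroot : ∃ ν, w = z ν
  · obtain ⟨ν, rfl⟩ := hroot
    have hk : k ν = 1 := le_antisymm (hw ▸ hzk ν) (hk1 ν)
    have hPz : P.eval (z ν) = 0 := by
      rw [hP, eval_mul, eval_prod, prod_eq_zero (mem_univ ν) (by simp), mul_zero]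
    simp [ht₀' ⟨ν, hk⟩, hPz, hw]
  push Not at hroot
  set u : Fin n → ℂ := fun ν => w / (w - z ν)
  have hPw : w * P.derivative.eval w = P.eval w * ∑ ν, u ν := by
    rw [hP, derivative_C_mul, eval_mul, eval_mul, eval_C, eval_derivative_prod_X_sub_C z hroot]
    simp only [u, div_eq_mul_one_div w, ← mul_sum]
    ring
  have hsum := mul_norm_sum_le_norm_sum_sub_card hk1
    (fun ν => Complex.mul_norm_div_sub_le_norm_div_sub_sub_one hw (hroot ν) (hzk ν))
    (by simpa using ht₀) ht₀'
  rw [Fintype.card_fin] at hsum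
  calc t₀ * ‖P.derivative.eval w‖ = ‖P.eval w‖ * (t₀ * ‖∑ ν, u ν‖) := by
        rw [← one_mul ‖P.derivative.eval w‖, ← hw, ← norm_mul, hPw, norm_mul]
        ring
    _ ≤ ‖P.eval w‖ * ‖∑ ν, u ν - n‖ := by gcongr
    _ = ‖n * P.eval w - w * P.derivative.eval w‖ := by
        rw [hPw, ← norm_mul, ← norm_neg]
        ring_nf

/-- **Lemma 1 (Gardner–Govil).** If `P(z) = a ∏ (z - z_ν)` has degree `n ≥ 1` with
`|z_ν| ≥ k_ν ≥ 1`, and `Q(z) = z^n conj(P(1/conj z))`, then `|Q'(z)| ≥ t₀ |P'(z)|`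
on `|z| = 1`. -/
theorem stmt_2 (n : ℕ) (hn : 1 ≤ n) (a : ℂ) (ha : a ≠ 0) (z : Fin n → ℂ)
    (P Q : Polynomial ℂ)
    (hP : P = Polynomial.C a * ∏ ν, (Polynomial.X - Polynomial.C (z ν)))
    (hQ : Q = Polynomial.reflect n (P.map (starRingEnd ℂ)))
    (k : Fin n → ℝ) (hk1 : ∀ ν, 1 ≤ k ν) (hzk : ∀ ν, k ν ≤ ‖z ν‖)
    (t₀ : ℝ)
    (ht₀ : (∀ ν, 1 < k ν) → t₀ = 1 + (n : ℝ) / ∑ ν, 1 / (k ν - 1))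
    (ht₀' : (∃ ν, k ν = 1) → t₀ = 1) :
    ∀ w : ℂ, ‖w‖ = 1 →
      t₀ * ‖P.derivative.eval w‖ ≤ ‖Q.derivative.eval w‖ :=
  stmt_2_general n a z P Q hP hQ k hk1 hzk t₀ ht₀ ht₀'
end

section
/- Let P be a complex polynomial of degree n ≥ 1 having all its zeros in the disk |z| < k, where 0 < k ≤ 1. Then for every complex number δ with |δ| ≤ 1, max_{|z|=1} |D_δ P(z)| ≤ n · ((|δ| + k)/(1 + k)) · max_{|z|=1} |P(z)|. -/
/-!
Put `A = n P(w) - w P'(w)`, so that `D_δ P(w) = A + δ P'(w)` for `|w| = 1`. By the logarithmic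
derivative, `w P'(w) / (n P(w))` is the mean of the points `w / (w - z)` over the zeros `z` of `P`,
and `|1 - w / (w - z)| = |z| |w / (w - z)|`. If the zeros lie in `|z| ≤ k ≤ 1`, these points lie
in the convex set `{t | |1 - t| ≤ k |t|}`, so `|A| ≤ k |P'(w)|`. If a polynomial `G` has no zeros
in `|z| ≤ 1`, they lie in the half plane `{t | |t| ≤ |1 - t|}`, so `|G'(w)| ≤ |n G(w) - w G'(w)|`.
Applied to `G = P + μ` with `|μ| > max_{|z|=1} |P|` and `n μ` pointing against `A`, this gives
`|P'(w)| + |A| ≤ n max_{|z|=1} |P|`. Finally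
`(|δ| + k) (|P'(w)| + |A|) - (1 + k) (|A| + |δ| |P'(w)|) = (1 - |δ|) (k |P'(w)| - |A|) ≥ 0`.
-/

open Polynomial

theorem Convex.inv_card_smul_sum_mem {E : Type*} [AddCommGroup E] [Module ℝ E] {s : Set E}
    (hs : Convex ℝ s) {T : Multiset E} (hT : T ≠ 0) (h : ∀ x ∈ T, x ∈ s) :
    (T.card : ℝ)⁻¹ • T.sum ∈ s := by
  classical
  have hcard : (T.card : ℝ) ≠ 0 := by exact_mod_cast (Multiset.card_pos.2 hT).ne'
  have hsum : (T.card : ℝ)⁻¹ • T.sum = ∑ x ∈ T.toFinset, ((T.count x : ℝ) / T.card) • x := by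
    simp_rw [Finset.sum_multiset_count, Finset.smul_sum, div_eq_inv_mul, mul_smul,
      Nat.cast_smul_eq_nsmul]
  rw [hsum]
  refine hs.sum_mem (fun _ _ => by positivity) ?_ (fun x hx => h x (Multiset.mem_toFinset.1 hx))
  rw [← Finset.sum_div, div_eq_one_iff_eq hcard]
  exact_mod_cast Multiset.toFinset_sum_count_eq T

theorem Complex.norm_one_sub_div_sub {w z : ℂ} (hw : ‖w‖ = 1) (hwz : w ≠ z) :
    ‖1 - w / (w - z)‖ = ‖z‖ * ‖w / (w - z)‖ := by
  have hne : w - z ≠ 0 := sub_ne_zero.2 hwz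
  rw [show 1 - w / (w - z) = -z / (w - z) by field_simp; ring]
  simp [hw, div_eq_mul_inv]

theorem Complex.convex_setOf_norm_one_sub_le_mul_norm {k : ℝ} (hk0 : 0 ≤ k) (hk1 : k ≤ 1) :
    Convex ℝ {t : ℂ | ‖1 - t‖ ≤ k * ‖t‖} := by
  have hset : {t : ℂ | ‖1 - t‖ ≤ k * ‖t‖} =
      {t : ℂ | 1 - 2 * t.re + (1 - k ^ 2) * (t.re ^ 2 + t.im ^ 2) ≤ 0} := by
    ext t
    simp only [Set.mem_ofPred_eq]
    rw [← abs_of_nonneg (by positivity : 0 ≤ k * ‖t‖), ← abs_norm, ← sq_le_sq, mul_pow,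
      Complex.sq_norm, Complex.sq_norm, Complex.normSq_apply, Complex.normSq_apply]
    simp only [Complex.sub_re, Complex.one_re, Complex.sub_im, Complex.one_im]
    constructor <;> intro h <;> nlinarith
  rw [hset]
  intro x hx y hy a b ha hb hab
  simp only [Set.mem_ofPred_eq, Complex.add_re, Complex.add_im, Complex.smul_re, Complex.smul_im,
    smul_eq_mul] at *
  have hb' : b = 1 - a := by linarith
  subst hb'
  have hk : 0 ≤ 1 - k ^ 2 := sub_nonneg.2 (pow_le_one₀ hk0 hk1)
  nlinarith [mul_nonneg (mul_nonneg (mul_nonneg ha hb) hk)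
    (add_nonneg (sq_nonneg (x.re - y.re)) (sq_nonneg (x.im - y.im)))]

theorem Complex.convex_setOf_norm_le_norm_one_sub : Convex ℝ {t : ℂ | ‖t‖ ≤ ‖1 - t‖} := by
  have hset : {t : ℂ | ‖t‖ ≤ ‖1 - t‖} = {t : ℂ | t.re ≤ 1 / 2} := by
    ext t
    simp only [Set.mem_ofPred_eq]
    rw [← abs_norm, ← abs_norm (1 - t), ← sq_le_sq, Complex.sq_norm, Complex.sq_norm,
      Complex.normSq_apply, Complex.normSq_apply]
    simp only [Complex.sub_re, Complex.one_re, Complex.sub_im, Complex.one_im]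
    constructor <;> intro h <;> nlinarith
  exact hset ▸ convex_halfSpace_re_le _

theorem Polynomial.mul_eval_derivative_div_mem {s : Set ℂ} (hs : Convex ℝ s) {Q : ℂ[X]}
    (hQ : 0 < Q.natDegree) {w : ℂ} (hQw : Q.eval w ≠ 0) (h : ∀ z ∈ Q.roots, w / (w - z) ∈ s) :
    w * Q.derivative.eval w / (Q.natDegree * Q.eval w) ∈ s := by
  have hsplit := IsAlgClosed.splits Q
  have hroots : Q.roots ≠ 0 := by
    rw [← Multiset.card_pos, ← hsplit.natDegree_eq_card_roots]; exact hQ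
  have hmean := hs.inv_card_smul_sum_mem (T := Q.roots.map fun z ↦ w / (w - z))
    (by simpa using hroots)
    (by simpa only [Multiset.mem_map, forall_exists_index, and_imp, forall_apply_eq_imp_iff₂])
  convert hmean using 1
  simp_rw [hsplit.eval_derivative_eq_eval_mul_sum hQw, Multiset.card_map,
    ← hsplit.natDegree_eq_card_roots, Complex.real_smul, ← mul_one_div w,
    Multiset.sum_map_mul_left, Complex.ofReal_inv, Complex.ofReal_natCast]
  field_simp

theorem Polynomial.norm_natDegree_mul_eval_sub_le {Q : ℂ[X]} {k : ℝ} (hk0 : 0 ≤ k) (hk1 : k ≤ 1)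
    (hzeros : ∀ z, Q.eval z = 0 → ‖z‖ ≤ k) {w : ℂ} (hw : ‖w‖ = 1) (hQw : Q.eval w ≠ 0) :
    ‖Q.natDegree * Q.eval w - w * Q.derivative.eval w‖ ≤ k * ‖Q.derivative.eval w‖ := by
  rcases Q.natDegree.eq_zero_or_pos with h0 | hpos
  · simp [h0, derivative_of_natDegree_zero h0]
  have hQ : Q ≠ 0 := fun h ↦ hQw (by simp [h])
  have hx : (Q.natDegree * Q.eval w : ℂ) ≠ 0 := mul_ne_zero (by exact_mod_cast hpos.ne') hQw
  have hmem := mul_eval_derivative_div_mem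
    (Complex.convex_setOf_norm_one_sub_le_mul_norm hk0 hk1) hpos hQw fun z hz ↦ by
      have hz : Q.eval z = 0 := (mem_roots hQ).1 hz
      rw [Set.mem_ofPred_eq, Complex.norm_one_sub_div_sub hw (fun h ↦ hQw (h ▸ hz))]
      gcongr
      exact hzeros z hz
  rw [Set.mem_ofPred_eq, ← mul_le_mul_iff_right₀ (norm_pos_iff.2 hx), ← norm_mul, mul_sub,
    mul_one, mul_div_cancel₀ _ hx, mul_left_comm, ← norm_mul, mul_div_cancel₀ _ hx, norm_mul,
    hw, one_mul] at hmem
  exact hmem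

theorem Polynomial.norm_eval_derivative_le {Q : ℂ[X]} (hzeros : ∀ z, Q.eval z = 0 → 1 ≤ ‖z‖)
    {w : ℂ} (hw : ‖w‖ = 1) (hQw : Q.eval w ≠ 0) :
    ‖Q.derivative.eval w‖ ≤ ‖Q.natDegree * Q.eval w - w * Q.derivative.eval w‖ := by
  rcases Q.natDegree.eq_zero_or_pos with h0 | hpos
  · simp [h0, derivative_of_natDegree_zero h0]
  have hQ : Q ≠ 0 := fun h ↦ hQw (by simp [h])
  have hx : (Q.natDegree * Q.eval w : ℂ) ≠ 0 := mul_ne_zero (by exact_mod_cast hpos.ne') hQw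
  have hmem := mul_eval_derivative_div_mem Complex.convex_setOf_norm_le_norm_one_sub hpos hQw
    fun z hz ↦ by
      have hz : Q.eval z = 0 := (mem_roots hQ).1 hz
      rw [Set.mem_ofPred_eq, Complex.norm_one_sub_div_sub hw (fun h ↦ hQw (h ▸ hz))]
      exact le_mul_of_one_le_left (norm_nonneg _) (hzeros z hz)
  rw [Set.mem_ofPred_eq, ← mul_le_mul_iff_right₀ (norm_pos_iff.2 hx), ← norm_mul, ← norm_mul,
    mul_sub, mul_one, mul_div_cancel₀ _ hx, norm_mul, hw, one_mul] at hmem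
  exact hmem

theorem Polynomial.norm_eval_le_of_forall_norm_eq_one {P : ℂ[X]} {M : ℝ}
    (hM : ∀ ζ : ℂ, ‖ζ‖ = 1 → ‖P.eval ζ‖ ≤ M) {u : ℂ} (hu : ‖u‖ ≤ 1) : ‖P.eval u‖ ≤ M := by
  refine Complex.norm_le_of_forall_mem_frontier_norm_le (Metric.isBounded_ball (x := 0) (r := 1))
    P.differentiable.diffContOnCl (fun z hz ↦ hM z ?_) (z := u) ?_
  · rwa [frontier_ball 0 one_ne_zero, mem_sphere_zero_iff_norm] at hz
  · rwa [closure_ball 0 one_ne_zero, mem_closedBall_zero_iff]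

theorem Polynomial.norm_eval_derivative_le_norm_add {P : ℂ[X]} {M : ℝ}
    (hM : ∀ ζ : ℂ, ‖ζ‖ = 1 → ‖P.eval ζ‖ ≤ M) {w : ℂ} (hw : ‖w‖ = 1) {μ : ℂ} (hμ : M < ‖μ‖) :
    ‖P.derivative.eval w‖ ≤
      ‖P.natDegree * P.eval w - w * P.derivative.eval w + P.natDegree * μ‖ := by
  have hne : ∀ z : ℂ, ‖z‖ ≤ 1 → (P + C μ).eval z ≠ 0 := fun z hz h ↦ by
    have := norm_eval_le_of_forall_norm_eq_one hM hz
    rw [eval_add, eval_C, add_eq_zero_iff_eq_neg] at h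
    rw [h, norm_neg] at this
    linarith
  have := norm_eval_derivative_le (fun z hz ↦ not_lt.1 fun h ↦ hne z h.le hz) hw (hne w hw.le)
  simp only [derivative_add, derivative_C, add_zero, natDegree_add_C, eval_add, eval_C] at this
  convert this using 2
  ring

theorem Polynomial.norm_eval_derivative_add_norm_le {P : ℂ[X]} {M : ℝ}
    (hM : ∀ ζ : ℂ, ‖ζ‖ = 1 → ‖P.eval ζ‖ ≤ M) {w : ℂ} (hw : ‖w‖ = 1)
    (h : ‖P.natDegree * P.eval w - w * P.derivative.eval w‖ ≤ ‖P.derivative.eval w‖) :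
    ‖P.derivative.eval w‖ + ‖P.natDegree * P.eval w - w * P.derivative.eval w‖ ≤
      P.natDegree * M := by
  rcases P.natDegree.eq_zero_or_pos with h0 | hpos
  · simp [h0, derivative_of_natDegree_zero h0]
  set A := (P.natDegree * P.eval w - w * P.derivative.eval w : ℂ)
  have hn : (0 : ℝ) < P.natDegree := by exact_mod_cast hpos
  have hM0 : 0 ≤ M :=
    (norm_nonneg _).trans (norm_eval_le_of_forall_norm_eq_one hM (u := 0) (by simp))
  have key : ∀ ρ : ℝ, P.natDegree * M < ρ → ‖P.derivative.eval w‖ ≤ |‖A‖ - ρ| := by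
    intro ρ hρ
    set u := Complex.exp (A.arg * Complex.I)
    have hu : ‖u‖ = 1 := Complex.norm_exp_ofReal_mul_I _
    have hAu : A = ‖A‖ * u := (Complex.norm_mul_exp_arg_mul_I A).symm
    have hμ : M < ‖-((ρ / P.natDegree : ℝ) : ℂ) * u‖ := by
      rw [norm_mul, norm_neg, hu, mul_one, Complex.norm_real, Real.norm_eq_abs, lt_abs,
        lt_div_iff₀ hn, mul_comm]
      exact Or.inl hρ
    calc ‖P.derivative.eval w‖ ≤ ‖A + P.natDegree * (-((ρ / P.natDegree : ℝ) : ℂ) * u)‖ :=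
          norm_eval_derivative_le_norm_add hM hw hμ
      _ = ‖((‖A‖ - ρ : ℝ) : ℂ) * u‖ := by
          have hn' : (P.natDegree : ℂ) ≠ 0 := by exact_mod_cast hpos.ne'
          congr 1
          nth_rw 1 [hAu]
          push_cast
          field_simp
          ring
      _ = |‖A‖ - ρ| := by rw [norm_mul, hu, mul_one, Complex.norm_real, Real.norm_eq_abs]
  refine le_of_forall_gt_imp_ge_of_dense fun ρ hρ ↦ ?_
  have hρ0 : 0 < ρ := (mul_nonneg hn.le hM0).trans_lt hρ
  have hp := key ρ hρ
  rcases le_or_gt ‖A‖ ρ with hAρ | hAρ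
  · rw [abs_of_nonpos (by linarith)] at hp
    linarith
  · rw [abs_of_pos (by linarith)] at hp
    linarith

theorem stmt_5_general (n : ℕ) (P : Polynomial ℂ) (hdeg : P.natDegree = n)
    (k : ℝ) (hk0 : 0 < k) (hk1 : k ≤ 1)
    (hzeros : ∀ w : ℂ, P.eval w = 0 → ‖w‖ < k)
    (δ : ℂ) (hδ : ‖δ‖ ≤ 1) :
    ∀ w : ℂ, ‖w‖ = 1 →
      ‖(n : ℂ) * P.eval w + (δ - w) * P.derivative.eval w‖ ≤
        (n : ℝ) * ((‖δ‖ + k) / (1 + k)) *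
          sSup ((fun ζ : ℂ => ‖P.eval ζ‖) '' {ζ : ℂ | ‖ζ‖ = 1}) := by
  intro w hw
  set M := sSup ((fun ζ : ℂ => ‖P.eval ζ‖) '' {ζ : ℂ | ‖ζ‖ = 1})
  have hM : ∀ ζ : ℂ, ‖ζ‖ = 1 → ‖P.eval ζ‖ ≤ M := by
    have hsphere : {ζ : ℂ | ‖ζ‖ = 1} = Metric.sphere 0 1 := by ext; simp
    refine fun ζ hζ ↦ le_csSup ?_ ⟨ζ, hζ, rfl⟩
    rw [hsphere]
    exact ((isCompact_sphere 0 1).image (continuous_norm.comp P.continuous)).bddAbove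
  have hPw : P.eval w ≠ 0 := fun h ↦ (hzeros w h).not_ge (hw ▸ hk1)
  have hA := norm_natDegree_mul_eval_sub_le hk0.le hk1 (fun z hz ↦ (hzeros z hz).le) hw hPw
  have hB := norm_eval_derivative_add_norm_le hM hw
    (hA.trans (mul_le_of_le_one_left (norm_nonneg _) hk1))
  rw [hdeg] at hA hB
  set p := ‖P.derivative.eval w‖
  set a := ‖(n * P.eval w - w * P.derivative.eval w : ℂ)‖
  have hD : ‖(n : ℂ) * P.eval w + (δ - w) * P.derivative.eval w‖ ≤ a + ‖δ‖ * p := by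
    rw [show (n : ℂ) * P.eval w + (δ - w) * P.derivative.eval w =
      (n * P.eval w - w * P.derivative.eval w) + δ * P.derivative.eval w by ring, ← norm_mul]
    exact norm_add_le _ _
  refine hD.trans ?_
  rw [show (n : ℝ) * ((‖δ‖ + k) / (1 + k)) * M = (‖δ‖ + k) * (n * M) / (1 + k) by ring,
    le_div_iff₀ (by linarith)]
  nlinarith [mul_nonneg (sub_nonneg.2 hδ) (sub_nonneg.2 hA), norm_nonneg δ]

/-- If `P` has degree `n ≥ 1` and all its zeros lie in `|z| < k` with `0 < k ≤ 1`, then for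
`|δ| ≤ 1`, `max_{|z|=1} |D_δ P(z)| ≤ n ((|δ| + k)/(1 + k)) max_{|z|=1} |P(z)|`. -/
theorem stmt_5 (n : ℕ) (hn : 1 ≤ n) (P : Polynomial ℂ) (hdeg : P.natDegree = n)
    (k : ℝ) (hk0 : 0 < k) (hk1 : k ≤ 1)
    (hzeros : ∀ w : ℂ, P.eval w = 0 → ‖w‖ < k)
    (δ : ℂ) (hδ : ‖δ‖ ≤ 1) :
    ∀ w : ℂ, ‖w‖ = 1 →
      ‖(n : ℂ) * P.eval w + (δ - w) * P.derivative.eval w‖ ≤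
        (n : ℝ) * ((‖δ‖ + k) / (1 + k)) *
          sSup ((fun ζ : ℂ => ‖P.eval ζ‖) '' {ζ : ℂ | ‖ζ‖ = 1}) :=
  stmt_5_general n P hdeg k hk0 hk1 hzeros δ hδ
end
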